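/- arXiv:2505.03304 — 5 statements merged into one kernel-verified Lean document; each statement's English description precedes it below -/
import Mathlib

section
/- Let d > 0, c > 0, t > 0 and G(t,X) = exp(-X²/(4dt))/√(4πdt). Then for every ξ > 0, one has e^{(c/d)ξ}·∫_{ct}^∞ G(t, x + ξ) dx ≤ exp(-(c√t/(2√d) - ξ/(2√(dt)))²). -/
open Real MeasureTheory Set

/-!
After the shift `x ↦ x + ξ` the integral is the Gaussian tail `∫_a^∞ e^{-x²/s}` with
`a = ct + ξ ≥ 0` and `s = 4dt`. Since `(y + a)² ≥ a² + y²` for `y, a ≥ 0`, this tail is at most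
`e^{-a²/s}` times the half-line Gaussian integral `√(πs)/2`, so the left side is at most
`e^{cξ/d - (ct+ξ)²/(4dt)}`, and `cξ/d - (ct+ξ)²/(4dt) = -(ct-ξ)²/(4dt)`, which is the exponent on
the right.
-/

theorem setIntegral_Ioi_comp_add_right {E : Type*} [NormedAddCommGroup E] [NormedSpace ℝ E]
    (f : ℝ → E) (b ξ : ℝ) : ∫ x in Ioi b, f (x + ξ) = ∫ x in Ioi (b + ξ), f x := by
  simpa using (measurePreserving_add_right volume ξ).setIntegral_preimage_emb
    (measurableEmbedding_addRight ξ) f (Ioi (b + ξ))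

theorem setIntegral_Ioi_exp_neg_sq_div_le {s a : ℝ} (hs : 0 < s) (ha : 0 ≤ a) :
    ∫ x in Ioi a, exp (-x ^ 2 / s) ≤ exp (-a ^ 2 / s) * (√(π * s) / 2) := by
  have hform : (fun y : ℝ => exp (-y ^ 2 / s)) = fun y => exp (-s⁻¹ * y ^ 2) := by
    ext y; ring_nf
  have hgauss : ∫ y in Ioi (0 : ℝ), exp (-y ^ 2 / s) = √(π * s) / 2 := by
    rw [hform, integral_gaussian_Ioi, div_inv_eq_mul]
  have hint : IntegrableOn (fun y : ℝ => exp (-a ^ 2 / s) * exp (-y ^ 2 / s)) (Ioi 0) := by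
    refine (Integrable.const_mul ?_ _).integrableOn
    simpa only [hform] using integrable_exp_neg_mul_sq (inv_pos.2 hs)
  calc ∫ x in Ioi a, exp (-x ^ 2 / s)
      = ∫ y in Ioi 0, exp (-(y + a) ^ 2 / s) := by
        rw [setIntegral_Ioi_comp_add_right (fun x => exp (-x ^ 2 / s)), zero_add]
    _ ≤ ∫ y in Ioi 0, exp (-a ^ 2 / s) * exp (-y ^ 2 / s) := by
        refine integral_mono_of_nonneg (.of_forall fun _ => (exp_pos _).le) hint ?_
        filter_upwards [ae_restrict_mem measurableSet_Ioi] with y (hy : 0 < y)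
        rw [← exp_add, exp_le_exp, ← add_div, div_le_div_iff_of_pos_right hs]
        nlinarith [mul_nonneg hy.le ha]
    _ = exp (-a ^ 2 / s) * (√(π * s) / 2) := by rw [integral_const_mul, hgauss]

theorem add_neg_sq_div_eq_neg_sq {d t : ℝ} (hd : 0 < d) (ht : 0 < t) (c ξ : ℝ) :
    c / d * ξ + -(c * t + ξ) ^ 2 / (4 * d * t)
      = -(c * √t / (2 * √d) - ξ / (2 * √(d * t))) ^ 2 := by
  obtain ⟨u, hu, rfl⟩ : ∃ u, 0 < u ∧ d = u ^ 2 := ⟨√d, sqrt_pos.2 hd, (sq_sqrt hd.le).symm⟩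
  obtain ⟨v, hv, rfl⟩ : ∃ v, 0 < v ∧ t = v ^ 2 := ⟨√t, sqrt_pos.2 ht, (sq_sqrt ht.le).symm⟩
  rw [sqrt_mul (by positivity), sqrt_sq hu.le, sqrt_sq hv.le]
  field_simp
  ring

/-- Tail bound for the shifted heat kernel with exponential weight: for all `ξ > 0`,
`e^{(c/d)ξ}·∫_{ct}^∞ G(t, x + ξ) dx ≤ exp(-(c√t/(2√d) - ξ/(2√(dt)))²)`. -/
theorem heat_kernel_tail_bound_plus (d c t ξ : ℝ)
    (hd : 0 < d) (hc : 0 < c) (ht : 0 < t) (hξ : 0 < ξ)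
    (G : ℝ → ℝ → ℝ)
    (hG : ∀ t X, G t X = Real.exp (-X ^ 2 / (4 * d * t)) / Real.sqrt (4 * Real.pi * d * t)) :
    Real.exp ((c / d) * ξ) * (∫ x in Set.Ioi (c * t), G t (x + ξ))
      ≤ Real.exp (-(c * Real.sqrt t / (2 * Real.sqrt d) - ξ / (2 * Real.sqrt (d * t))) ^ 2) := by
  have hs : 0 < 4 * d * t := by positivity
  have hG_int : ∫ x in Ioi (c * t), G t (x + ξ)
      = (∫ x in Ioi (c * t + ξ), exp (-x ^ 2 / (4 * d * t))) / √(π * (4 * d * t)) := by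
    simp only [hG]
    rw [integral_div, setIntegral_Ioi_comp_add_right (fun x => exp (-x ^ 2 / (4 * d * t)))]
    congr 2; ring
  have htail : ∫ x in Ioi (c * t), G t (x + ξ) ≤ exp (-(c * t + ξ) ^ 2 / (4 * d * t)) := by
    rw [hG_int, div_le_iff₀ (by positivity)]
    refine (setIntegral_Ioi_exp_neg_sq_div_le hs (by positivity)).trans ?_
    gcongr
    linarith [sqrt_nonneg (π * (4 * d * t))]
  calc exp (c / d * ξ) * ∫ x in Ioi (c * t), G t (x + ξ)
      ≤ exp (c / d * ξ) * exp (-(c * t + ξ) ^ 2 / (4 * d * t)) := by gcongr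
    _ = _ := by rw [← exp_add, add_neg_sq_div_eq_neg_sq hd ht]
end

section
/- For any d > 0 and τ > 0, the convolution integral L(τ) := ∫₀^τ 1/((a + τ - s)·√s) ds with a := 1/(2β-1) > 0 (β ∈ (1/2,1]) satisfies L(τ) ≤ 2√2/√τ + √2·log(1 + (2β-1)τ/2)/√τ. -/
open Real intervalIntegral

/-!
Split `[0, τ]` at `τ / 2`. On `[0, τ/2]` the kernel `(a + τ - s)⁻¹` is at most `2 / τ`, and
`∫₀^{τ/2} s^{-1/2} ds = √(2τ)` gives the first term. On `[τ/2, τ]` the factor `s^{-1/2}` is at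
most `√2 / √τ`, and `∫_{τ/2}^τ (a + τ - s)⁻¹ ds = log (1 + τ / (2a))` gives the second.
-/

lemma inv_sqrt_eq_rpow {s : ℝ} (hs : 0 ≤ s) : (√s)⁻¹ = s ^ (-(1 / 2) : ℝ) := by
  rw [rpow_neg hs, sqrt_eq_rpow]

lemma intervalIntegrable_inv_sqrt {b : ℝ} (hb : 0 ≤ b) :
    IntervalIntegrable (fun s : ℝ => (√s)⁻¹) MeasureTheory.volume 0 b := by
  refine (intervalIntegrable_rpow' (r := -(1 / 2)) (by norm_num)).congr fun s hs => ?_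
  rw [Set.uIoc_of_le hb] at hs
  exact (inv_sqrt_eq_rpow hs.1.le).symm

lemma integral_inv_sqrt {b : ℝ} (hb : 0 ≤ b) : ∫ s in (0 : ℝ)..b, (√s)⁻¹ = 2 * √b := by
  rw [integral_congr fun s hs => inv_sqrt_eq_rpow (by rw [Set.uIcc_of_le hb] at hs; exact hs.1),
    integral_rpow (Or.inl (by norm_num)), zero_rpow (by norm_num), sqrt_eq_rpow]
  norm_num
  ring

lemma integral_inv_sub_left {b c d : ℝ} (hb : b < d) (hc : c < d) :
    ∫ s in b..c, (d - s)⁻¹ = log ((d - b) / (d - c)) := by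
  rw [integral_comp_sub_left (fun u : ℝ => u⁻¹), integral_inv]
  rw [Set.mem_uIcc]
  rintro (h | h) <;> linarith [h.1, h.2]

lemma one_div_mul_sqrt_le_of_le_left {c x s : ℝ} (hc : 0 < c) (hx : c ≤ x) :
    1 / (x * √s) ≤ c⁻¹ * (√s)⁻¹ := by
  rw [one_div, mul_inv]
  gcongr

lemma one_div_mul_sqrt_le_of_le_right {c x s : ℝ} (hc : 0 < c) (hs : c ≤ s) (hx : 0 ≤ x) :
    1 / (x * √s) ≤ (√c)⁻¹ * x⁻¹ := by
  rw [one_div, mul_inv, mul_comm]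
  gcongr

section

variable {a τ : ℝ}

lemma intervalIntegrable_one_div_mul_sqrt (ha : 0 < a) (hτ : 0 ≤ τ) :
    IntervalIntegrable (fun s => 1 / ((a + τ - s) * √s)) MeasureTheory.volume 0 τ := by
  have hmeas : Measurable fun s => 1 / ((a + τ - s) * √s) := by fun_prop
  refine ((intervalIntegrable_inv_sqrt hτ).const_mul a⁻¹).mono_fun hmeas.aestronglyMeasurable ?_
  rw [Set.uIoc_of_le hτ]
  filter_upwards [MeasureTheory.ae_restrict_mem measurableSet_Ioc] with s hs
  have hx : a ≤ a + τ - s := by linarith [hs.2]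
  have hx₀ : 0 ≤ a + τ - s := ha.le.trans hx
  rw [norm_of_nonneg (by positivity), norm_of_nonneg (by positivity)]
  exact one_div_mul_sqrt_le_of_le_left ha hx

theorem integral_one_div_mul_sqrt_le (ha : 0 < a) (hτ : 0 < τ) :
    ∫ s in (0 : ℝ)..τ, 1 / ((a + τ - s) * √s)
      ≤ 2 * √2 / √τ + √2 * log (1 + τ / (2 * a)) / √τ := by
  have hτ2 : 0 < τ / 2 := by positivity
  have hf := intervalIntegrable_one_div_mul_sqrt ha hτ.le
  have hmid : τ / 2 ∈ Set.uIcc 0 τ := by rw [Set.uIcc_of_le hτ.le]; constructor <;> linarith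
  have hf₁ := hf.mono_set (Set.uIcc_subset_uIcc_left hmid)
  have hf₂ := hf.mono_set (Set.uIcc_subset_uIcc_right hmid)
  have near_zero : ∫ s in (0 : ℝ)..τ / 2, 1 / ((a + τ - s) * √s)
      ≤ ∫ s in (0 : ℝ)..τ / 2, (τ / 2)⁻¹ * (√s)⁻¹ :=
    integral_mono_on hτ2.le hf₁ ((intervalIntegrable_inv_sqrt hτ2.le).const_mul _) fun s hs =>
      one_div_mul_sqrt_le_of_le_left hτ2 (by linarith [hs.2])
  have near_τ : ∫ s in τ / 2..τ, 1 / ((a + τ - s) * √s)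
      ≤ ∫ s in τ / 2..τ, (√(τ / 2))⁻¹ * (a + τ - s)⁻¹ :=
    have hpos : ∀ s ∈ Set.uIcc (τ / 2) τ, a + τ - s ≠ 0 := fun s hs => by
      rw [Set.uIcc_of_le (by linarith)] at hs
      linarith [hs.2]
    integral_mono_on (by linarith) hf₂
      ((intervalIntegrable_inv hpos (by fun_prop)).const_mul _) fun s hs =>
      one_div_mul_sqrt_le_of_le_right hτ2 hs.1 (by linarith [hs.2])
  rw [← integral_add_adjacent_intervals hf₁ hf₂]
  refine (add_le_add near_zero near_τ).trans_eq ?_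
  rw [integral_const_mul, integral_const_mul, integral_inv_sqrt hτ2.le,
    integral_inv_sub_left (by linarith) (by linarith)]
  have hlog : (a + τ - τ / 2) / (a + τ - τ) = 1 + τ / (2 * a) := by
    rw [add_sub_cancel_right]
    field_simp
    ring
  rw [hlog, sqrt_div hτ.le]
  field_simp
  linear_combination 4 * sq_sqrt hτ.le - 2 * τ * sq_sqrt zero_le_two

end

/-- Bound on the convolution integral
`L(τ) = ∫₀^τ (a + τ - s)⁻¹ s^{-1/2} ds` with `a = 1/(2β-1)`. -/
theorem convolution_integral_bound (β : ℝ) (hβ : β ∈ Set.Ioc (1 / 2 : ℝ) 1)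
    (τ : ℝ) (hτ : 0 < τ) :
    (∫ s in (0 : ℝ)..τ, 1 / ((1 / (2 * β - 1) + τ - s) * Real.sqrt s))
      ≤ 2 * Real.sqrt 2 / Real.sqrt τ
        + Real.sqrt 2 * Real.log (1 + (2 * β - 1) * τ / 2) / Real.sqrt τ := by
  have hb : 0 < 2 * β - 1 := by linarith [hβ.1]
  convert integral_one_div_mul_sqrt_le (one_div_pos.2 hb) hτ using 4
  field_simp
end

section
/- Let d > 0, c > 0, β > 0, s > 0. Define K(s,ξ) := ∫₀^∞ [|y + cβs - ξ|·exp(-(y+cβs-ξ)²/(4ds)) + (y + cβs + ξ)·exp(-(y+cβs+ξ)²/(4ds))·e^{(cβ/d)ξ}] dy. Then K(s,ξ) ≤ 6ds for every ξ ≥ 0. -/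
/-!
Put `D = 4ds`. Both terms of the integrand are first moments of the Gaussian `exp (-x² / D)`,
which has the primitive `-(D / 2) exp (-x² / D)`. The first term, a translate restricted to a
half-line, is at most the full-line moment `∫ |x| exp (-x² / D) dx = D`. The second integrates
to `(D / 2) exp (-(cβs + ξ)² / D)`, and since `4 (cβs) ξ ≤ (cβs + ξ)²` this Gaussian factor
absorbs the weight `exp ((cβ / d) ξ)`. Hence `K(s, ξ) ≤ D + D / 2 = 6ds`.
-/

open Real MeasureTheory Set Filter Topology

section GaussianMoment

variable {D : ℝ}

theorem hasDerivAt_neg_half_mul_exp_neg_sq_div (hD : D ≠ 0) (x : ℝ) :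
    HasDerivAt (fun x => -(D / 2) * exp (-x ^ 2 / D)) (x * exp (-x ^ 2 / D)) x := by
  have hexponent : HasDerivAt (fun x => -x ^ 2 / D) (-(2 * x) / D) x := by
    simpa using (hasDerivAt_pow 2 x).neg.div_const D
  refine (hexponent.exp.const_mul (-(D / 2))).congr_deriv ?_
  field_simp

theorem integrable_mul_exp_neg_sq_div (hD : 0 < D) :
    Integrable fun x : ℝ => x * exp (-x ^ 2 / D) := by
  convert integrable_mul_exp_neg_mul_sq (inv_pos.2 hD) using 4 with x
  ring

theorem integral_Ioi_add_mul_exp_neg_sq_div (hD : 0 < D) {t : ℝ} (ht : 0 ≤ t) :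
    ∫ y in Ioi 0, (y + t) * exp (-(y + t) ^ 2 / D) = D / 2 * exp (-t ^ 2 / D) := by
  have hderiv (y : ℝ) : HasDerivAt (fun y => -(D / 2) * exp (-(y + t) ^ 2 / D))
      ((y + t) * exp (-(y + t) ^ 2 / D)) y :=
    (hasDerivAt_neg_half_mul_exp_neg_sq_div hD.ne' (y + t)).comp_add_const y t
  have hlim : Tendsto (fun y => -(D / 2) * exp (-(y + t) ^ 2 / D)) atTop (𝓝 0) := by
    have : Tendsto (fun y : ℝ => -(y + t) ^ 2 / D) atTop atBot :=
      (tendsto_neg_atTop_atBot.comp ((tendsto_pow_atTop two_ne_zero).comp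
        (tendsto_atTop_add_const_right _ t tendsto_id))).atBot_div_const hD
    simpa using (tendsto_exp_atBot.comp this).const_mul (-(D / 2))
  rw [integral_Ioi_of_hasDerivAt_of_nonneg' (fun y _ => hderiv y)
    (fun y hy => mul_nonneg (by linarith [hy.out]) (exp_nonneg _)) hlim]
  simp only [zero_add]
  ring

theorem integral_abs_mul_exp_neg_sq_div (hD : 0 < D) :
    ∫ x, |x| * exp (-x ^ 2 / D) = D := by
  have h := integral_comp_abs (f := fun x => x * exp (-x ^ 2 / D))
  simp only [sq_abs] at h
  have hhalf : ∫ x in Ioi 0, x * exp (-x ^ 2 / D) = D / 2 := by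
    simpa using integral_Ioi_add_mul_exp_neg_sq_div hD le_rfl
  rw [h, hhalf]
  ring

theorem integral_Ioi_abs_add_mul_exp_neg_sq_div_le (hD : 0 < D) (t : ℝ) :
    ∫ y in Ioi 0, |y + t| * exp (-(y + t) ^ 2 / D) ≤ D := by
  have hint : Integrable fun x : ℝ => |x| * exp (-x ^ 2 / D) := by
    simpa [abs_mul] using (integrable_mul_exp_neg_sq_div hD).abs
  calc ∫ y in Ioi 0, |y + t| * exp (-(y + t) ^ 2 / D)
      ≤ ∫ y, |y + t| * exp (-(y + t) ^ 2 / D) :=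
        setIntegral_le_integral (hint.comp_add_right t)
          (Eventually.of_forall fun _ => by positivity)
    _ = D := by
        rw [integral_add_right_eq_self (fun x => |x| * exp (-x ^ 2 / D)) t,
          integral_abs_mul_exp_neg_sq_div hD]

end GaussianMoment

/-- Bound `K(s,ξ) ≤ 6ds` on the kernel integral arising in the Duhamel estimate. -/
theorem kernel_integral_bound (d c β s : ℝ)
    (hd : 0 < d) (hc : 0 < c) (hβ : 0 < β) (hs : 0 < s) :
    ∀ ξ ≥ (0 : ℝ),
      (∫ y in Set.Ioi (0 : ℝ),
        (|y + c * β * s - ξ| * Real.exp (-(y + c * β * s - ξ) ^ 2 / (4 * d * s))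
          + (y + c * β * s + ξ) * Real.exp (-(y + c * β * s + ξ) ^ 2 / (4 * d * s))
            * Real.exp ((c * β / d) * ξ)))
      ≤ 6 * d * s := by
  intro ξ hξ
  have hD : 0 < 4 * d * s := by positivity
  have hdrift : 0 ≤ c * β * s + ξ := by positivity
  have hweight : exp (-(c * β * s + ξ) ^ 2 / (4 * d * s)) * exp (c * β / d * ξ) ≤ 1 := by
    rw [← exp_add, exp_le_one_iff, show c * β / d * ξ = 4 * (c * β * s) * ξ / (4 * d * s) by
      field_simp, ← add_div]
    exact div_nonpos_of_nonpos_of_nonneg (by nlinarith [sq_nonneg (c * β * s - ξ)]) hD.le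
  simp_rw [add_sub_assoc, add_assoc]
  have hint (t : ℝ) :
      IntegrableOn (fun y => (y + t) * exp (-(y + t) ^ 2 / (4 * d * s))) (Ioi 0) :=
    ((integrable_mul_exp_neg_sq_div hD).comp_add_right t).integrableOn
  rw [integral_add (by simpa [abs_mul] using (hint _).abs) ((hint _).mul_const _),
    integral_mul_const, integral_Ioi_add_mul_exp_neg_sq_div hD hdrift]
  have hfirst := integral_Ioi_abs_add_mul_exp_neg_sq_div_le hD (c * β * s - ξ)
  have hsecond : 4 * d * s / 2 * exp (-(c * β * s + ξ) ^ 2 / (4 * d * s)) * exp (c * β / d * ξ)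
      ≤ 4 * d * s / 2 := by
    rw [mul_assoc]
    exact mul_le_of_le_one_right (by positivity) hweight
  linarith
end

section
/- Let d > 0, β ∈ (0, 1/2), c > 0, and ψ(τ) := 2cβ·e^{(2β-1)τ}. The function w̄(τ,y) := exp(-y²/(4d) - ψ(τ)y/(2d)) is a supersolution of the rescaled Fokker–Planck problem: ∂_τ w̄ - 2d·∂_{yy}w̄ - ∂_y((y + ψ(τ))w̄) = (cβ(1-2β)/d)·e^{(2β-1)τ}·y·w̄ ≥ 0 for all τ > 0, y > 0, and the boundary identity -2d·∂_y w̄(τ,0) = ψ(τ)·w̄(τ,0) holds for all τ > 0. -/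
/-!
Write `w̄(τ, ·) = exp ∘ q` with `q(y) = -y²/(4d) - ψ y/(2d)`. Since `2d q' = -(y + ψ)`, the
diffusion and drift terms cancel exactly (`w̄` is the stationary Gaussian profile for frozen `ψ`),
and only the time derivative survives: the residual is `-ψ'(τ) y/(2d) · w̄`. For
`ψ = 2cβ e^{(2β-1)τ}` this is `cβ(1 - 2β)/d · e^{(2β-1)τ} y w̄`, nonnegative because `β < 1/2`.
The boundary identity is `2d q'(0) = -ψ`.
-/

open Real

namespace FokkerPlanck

noncomputable def residual (d : ℝ) (ψ : ℝ → ℝ) (w : ℝ → ℝ → ℝ) (τ y : ℝ) : ℝ :=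
  deriv (fun σ => w σ y) τ - 2 * d * deriv (deriv (fun z => w τ z)) y
    - deriv (fun z => (z + ψ τ) * w τ z) y

noncomputable def gaussianProfile (d p z : ℝ) : ℝ := exp (-z ^ 2 / (4 * d) - p * z / (2 * d))

variable {d : ℝ}

theorem gaussianProfile_pos (d p z : ℝ) : 0 < gaussianProfile d p z := exp_pos _

theorem hasDerivAt_gaussianProfile (d p z : ℝ) :
    HasDerivAt (gaussianProfile d p) (-(z + p) / (2 * d) * gaussianProfile d p z) z := by
  have hexponent : HasDerivAt (fun z : ℝ => -z ^ 2 / (4 * d) - p * z / (2 * d))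
      (-(z + p) / (2 * d)) z := by
    refine (((hasDerivAt_pow 2 z).fun_neg.div_const (4 * d)).fun_sub
      (((hasDerivAt_id' z).const_mul p).div_const (2 * d))).congr_deriv ?_
    push_cast
    ring
  exact mul_comm (gaussianProfile d p z) _ ▸ hexponent.exp

theorem deriv_gaussianProfile (d p : ℝ) :
    deriv (gaussianProfile d p) = fun z => -(z + p) / (2 * d) * gaussianProfile d p z :=
  funext fun z => (hasDerivAt_gaussianProfile d p z).deriv

theorem deriv_deriv_gaussianProfile (d p z : ℝ) :
    deriv (deriv (gaussianProfile d p)) z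
      = (-1 / (2 * d) + (-(z + p) / (2 * d)) ^ 2) * gaussianProfile d p z := by
  have hfactor : HasDerivAt (fun z : ℝ => -(z + p) / (2 * d)) (-1 / (2 * d)) z := by
    simpa using ((hasDerivAt_id z).add_const p).neg.div_const (2 * d)
  rw [deriv_gaussianProfile, (hfactor.fun_mul (hasDerivAt_gaussianProfile d p z)).deriv]
  ring

theorem deriv_drift_mul_gaussianProfile (d p z : ℝ) :
    deriv (fun z => (z + p) * gaussianProfile d p z) z
      = (1 + (z + p) * (-(z + p) / (2 * d))) * gaussianProfile d p z := by
  rw [(((hasDerivAt_id' z).add_const p).fun_mul (hasDerivAt_gaussianProfile d p z)).deriv]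
  ring

theorem hasDerivAt_gaussianProfile_param {ψ : ℝ → ℝ} {ψ' τ : ℝ} (hψ : HasDerivAt ψ ψ' τ)
    (y : ℝ) :
    HasDerivAt (fun σ => gaussianProfile d (ψ σ) y)
      (-(ψ' * y / (2 * d)) * gaussianProfile d (ψ τ) y) τ := by
  have hexponent : HasDerivAt (fun σ => -y ^ 2 / (4 * d) - ψ σ * y / (2 * d))
      (-(ψ' * y / (2 * d))) τ := by
    simpa using ((hψ.mul_const y).div_const (2 * d)).const_sub (-y ^ 2 / (4 * d))
  exact mul_comm (gaussianProfile d (ψ τ) y) _ ▸ hexponent.exp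

theorem residual_gaussianProfile (hd : d ≠ 0) {ψ : ℝ → ℝ} {ψ' τ : ℝ}
    (hψ : HasDerivAt ψ ψ' τ) (y : ℝ) :
    residual d ψ (fun σ => gaussianProfile d (ψ σ)) τ y
      = -(ψ' * y / (2 * d)) * gaussianProfile d (ψ τ) y := by
  rw [residual, (hasDerivAt_gaussianProfile_param hψ y).deriv, deriv_deriv_gaussianProfile,
    deriv_drift_mul_gaussianProfile]
  field_simp
  ring

theorem flux_gaussianProfile_zero (hd : d ≠ 0) (p : ℝ) :
    -(2 * d * deriv (gaussianProfile d p) 0) = p * gaussianProfile d p 0 := by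
  rw [deriv_gaussianProfile]
  field_simp
  ring

end FokkerPlanck

open FokkerPlanck

/-- `w̄(τ,y) = exp(-y²/(4d) - ψ(τ)y/(2d))` is a supersolution of the rescaled
Fokker–Planck problem for `β ∈ (0,1/2)`, with exact boundary identity. -/
theorem supersolution_subcritical (d c β : ℝ)
    (hd : 0 < d) (hc : 0 < c) (hβ : β ∈ Set.Ioo (0 : ℝ) (1 / 2))
    (ψ : ℝ → ℝ) (hψ : ∀ τ, ψ τ = 2 * c * β * Real.exp ((2 * β - 1) * τ))
    (w : ℝ → ℝ → ℝ)
    (hw : ∀ τ y, w τ y = Real.exp (-y ^ 2 / (4 * d) - ψ τ * y / (2 * d))) :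
    (∀ τ > (0 : ℝ), ∀ y > (0 : ℝ),
      deriv (fun σ => w σ y) τ - 2 * d * deriv (deriv (fun z => w τ z)) y
        - deriv (fun z => (z + ψ τ) * w τ z) y
        = (c * β * (1 - 2 * β) / d) * Real.exp ((2 * β - 1) * τ) * y * w τ y ∧
      0 ≤ (c * β * (1 - 2 * β) / d) * Real.exp ((2 * β - 1) * τ) * y * w τ y) ∧
    (∀ τ > (0 : ℝ), -(2 * d * deriv (fun z => w τ z) 0) = ψ τ * w τ 0) := by
  obtain rfl : w = fun τ => gaussianProfile d (ψ τ) := funext₂ hw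
  have hψ' (τ : ℝ) :
      HasDerivAt ψ (2 * c * β * (exp ((2 * β - 1) * τ) * (2 * β - 1))) τ := by
    rw [funext hψ]
    simpa using (((hasDerivAt_id' τ).const_mul (2 * β - 1)).exp).const_mul (2 * c * β)
  refine ⟨fun τ _ y hy => ⟨?_, ?_⟩, fun τ _ => flux_gaussianProfile_zero hd.ne' _⟩
  · change FokkerPlanck.residual d ψ (fun σ => gaussianProfile d (ψ σ)) τ y = _
    rw [residual_gaussianProfile hd.ne' (hψ' τ)]
    field_simp
    ring
  · have hβ_pos : 0 < β := hβ.1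
    have hβ_sub : 0 < 1 - 2 * β := by linarith [hβ.2]
    have hw_pos := gaussianProfile_pos d (ψ τ) y
    positivity
end

section
/- Let d > 0, c > 0, β ∈ (1/2, 1], η(τ) := (β-1)/(1 + (2β-1)τ), and λ > 0. The function w̄(τ,y) := λ·exp(-(cβ/d)y + η(τ)y²/(2d)) satisfies ∂_τ w̄ - d·∂_{yy}w̄ - ∂_y((cβ - η(τ)y)w̄) = (y²η'(τ)/(2d))·w̄ ≥ 0 for all τ > 0, y > 0, and -d·∂_y w̄(τ,0) - cβ·w̄(τ,0) = 0 for all τ > 0. Moreover, since η(τ) ≤ 0, ∫₀^∞ ξ·w̄(τ,ξ) dξ ≤ λ·∫₀^∞ ξ·e^{-(cβ/d)ξ} dξ = λd²/(c²β²) for every τ ≥ 0. -/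
/-!
Everything is explicit calculus. Writing `w̄ = λ·exp(φ)`, the spatial derivative is
`w̄·(-(cβ/d) + ηy/d)`, so the zero-flux boundary condition holds identically and the
Fokker–Planck terms cancel except for the time derivative of the exponent, `y²η'/(2d)·w̄`;
this is nonnegative because `η` increases for `β ∈ (1/2, 1]`. As `η ≤ 0`, the Gaussian factor
is at most `1`, so the first moment is dominated by that of `λ·exp(-(cβ/d)ξ)`, which is
`λ·Γ(2)·(d/(cβ))²`.
-/

open Real MeasureTheory

lemma integrableOn_Ioi_mul_exp_neg_mul {a : ℝ} (ha : 0 < a) :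
    IntegrableOn (fun ξ : ℝ => ξ * exp (-a * ξ)) (Set.Ioi 0) := by
  refine (integrableOn_rpow_mul_exp_neg_mul_rpow (s := 1) (p := 1) (by norm_num) one_pos ha).congr_fun
    (fun ξ _ => ?_) measurableSet_Ioi
  simp only [rpow_one]

lemma integral_Ioi_mul_exp_neg_mul {a : ℝ} (ha : 0 < a) :
    ∫ ξ in Set.Ioi (0 : ℝ), ξ * exp (-a * ξ) = 1 / a ^ 2 := by
  have h := integral_rpow_mul_exp_neg_mul_Ioi two_pos ha
  rw [show (2 : ℝ) - 1 = 1 by norm_num, Gamma_two, mul_one, rpow_two] at h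
  simpa only [rpow_one, neg_mul, one_div, inv_pow] using h

lemma hasDerivAt_const_div_one_add_mul (p q τ : ℝ) (hτ : 1 + q * τ ≠ 0) :
    HasDerivAt (fun σ => p / (1 + q * σ)) (-(p * q) / (1 + q * τ) ^ 2) τ := by
  have hden := (((hasDerivAt_id' τ).const_mul q).const_add 1).congr_deriv (mul_one q)
  exact ((hasDerivAt_const τ p).div hden hτ).congr_deriv (by ring)

/-- The paper's `w̄` is the case `b = cβ`. -/
noncomputable def supersolutionProfile (lam b d : ℝ) (η : ℝ → ℝ) (τ y : ℝ) : ℝ :=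
  lam * exp (-(b / d) * y + η τ * y ^ 2 / (2 * d))

namespace supersolutionProfile

variable {lam b d : ℝ} {η : ℝ → ℝ}

local notation "W" => supersolutionProfile lam b d η

lemma hasDerivAt_space (τ y : ℝ) :
    HasDerivAt (W τ) (W τ y * (-(b / d) + η τ * y / d)) y := by
  have hexponent : HasDerivAt (fun z => -(b / d) * z + η τ * z ^ 2 / (2 * d))
      (-(b / d) + η τ * y / d) y := by
    refine (((hasDerivAt_id' y).const_mul (-(b / d))).add
      (((hasDerivAt_pow 2 y).const_mul (η τ)).div_const (2 * d))).congr_deriv ?_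
    field_simp
    ring
  unfold supersolutionProfile
  exact (hexponent.exp.const_mul lam).congr_deriv (by ring)

lemma deriv_space (τ : ℝ) : deriv (W τ) = fun y => W τ y * (-(b / d) + η τ * y / d) :=
  funext fun y => (hasDerivAt_space τ y).deriv

lemma hasDerivAt_time {η' τ : ℝ} (hη : HasDerivAt η η' τ) (y : ℝ) :
    HasDerivAt (fun σ => W σ y) (W τ y * (η' * y ^ 2 / (2 * d))) τ := by
  have hexponent := ((hη.mul_const (y ^ 2)).div_const (2 * d)).const_add (-(b / d) * y)
  unfold supersolutionProfile
  exact (hexponent.exp.const_mul lam).congr_deriv (by ring)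

theorem fokkerPlanck_residual_eq (hd : d ≠ 0) {τ : ℝ} (hη : DifferentiableAt ℝ η τ) (y : ℝ) :
    deriv (fun σ => W σ y) τ - d * deriv (deriv (W τ)) y
        - deriv (fun z => (b - η τ * z) * W τ z) y
      = (y ^ 2 * deriv η τ / (2 * d)) * W τ y := by
  have hsecond : HasDerivAt (deriv (W τ))
      (W τ y * (-(b / d) + η τ * y / d) * (-(b / d) + η τ * y / d) + W τ y * (η τ / d)) y := by
    rw [deriv_space]
    exact (hasDerivAt_space τ y).mul <|
      ((((hasDerivAt_id' y).const_mul (η τ)).div_const d).const_add (-(b / d))).congr_deriv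
        (by ring)
  have hflux : HasDerivAt (fun z => (b - η τ * z) * W τ z)
      (-η τ * W τ y + (b - η τ * y) * (W τ y * (-(b / d) + η τ * y / d))) y := by
    exact ((((hasDerivAt_id' y).const_mul (η τ)).const_sub b).congr_deriv (by ring)).mul
      (hasDerivAt_space τ y)
  rw [(hasDerivAt_time hη.hasDerivAt y).deriv, hsecond.deriv, hflux.deriv]
  field_simp
  ring

theorem robin_boundary_eq_zero (hd : d ≠ 0) (τ : ℝ) : -(d * deriv (W τ) 0) - b * W τ 0 = 0 := by
  rw [(hasDerivAt_space τ 0).deriv]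
  field_simp
  ring

lemma nonneg (hlam : 0 ≤ lam) (τ y : ℝ) : 0 ≤ W τ y := by
  unfold supersolutionProfile
  positivity

lemma le_exp (hlam : 0 ≤ lam) (hd : 0 ≤ d) {τ : ℝ} (hη : η τ ≤ 0) (y : ℝ) :
    W τ y ≤ lam * exp (-(b / d) * y) := by
  have hquad : η τ * y ^ 2 / (2 * d) ≤ 0 :=
    div_nonpos_of_nonpos_of_nonneg (mul_nonpos_of_nonpos_of_nonneg hη (sq_nonneg y)) (by positivity)
  unfold supersolutionProfile
  gcongr
  linarith

theorem setIntegral_moment_le (hlam : 0 ≤ lam) (hd : 0 ≤ d) (hbd : 0 < b / d) {τ : ℝ}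
    (hη : η τ ≤ 0) :
    ∫ ξ in Set.Ioi (0 : ℝ), ξ * W τ ξ ≤ lam * ∫ ξ in Set.Ioi (0 : ℝ), ξ * exp (-(b / d) * ξ) := by
  rw [← integral_const_mul]
  refine integral_mono_of_nonneg ?_ ((integrableOn_Ioi_mul_exp_neg_mul hbd).const_mul lam) ?_
  all_goals filter_upwards [ae_restrict_mem measurableSet_Ioi] with ξ (hξ : 0 < ξ)
  · exact mul_nonneg hξ.le (nonneg hlam τ ξ)
  · calc ξ * W τ ξ ≤ ξ * (lam * exp (-(b / d) * ξ)) := by gcongr; exact le_exp hlam hd hη ξ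
      _ = lam * (ξ * exp (-(b / d) * ξ)) := by ring

end supersolutionProfile

open supersolutionProfile in
/-- `w̄(τ,y) = λ·exp(-(cβ/d)y + η(τ)y²/(2d))` is a supersolution of the
super-critical rescaled problem, and its first moment is uniformly bounded by
`λd²/(c²β²)`. -/
theorem supersolution_supercritical (d c β lam : ℝ)
    (hd : 0 < d) (hc : 0 < c) (hβ : β ∈ Set.Ioc (1 / 2 : ℝ) 1) (hlam : 0 < lam)
    (η : ℝ → ℝ) (hη : ∀ τ, η τ = (β - 1) / (1 + (2 * β - 1) * τ))
    (w : ℝ → ℝ → ℝ)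
    (hw : ∀ τ y, w τ y = lam * Real.exp (-(c * β / d) * y + η τ * y ^ 2 / (2 * d))) :
    (∀ τ > (0 : ℝ), ∀ y > (0 : ℝ),
      deriv (fun σ => w σ y) τ - d * deriv (deriv (fun z => w τ z)) y
        - deriv (fun z => (c * β - η τ * z) * w τ z) y
        = (y ^ 2 * deriv η τ / (2 * d)) * w τ y ∧
      0 ≤ (y ^ 2 * deriv η τ / (2 * d)) * w τ y) ∧
    (∀ τ > (0 : ℝ), -(d * deriv (fun z => w τ z) 0) - c * β * w τ 0 = 0) ∧
    (∀ τ ≥ (0 : ℝ),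
      (∫ ξ in Set.Ioi (0 : ℝ), ξ * w τ ξ)
        ≤ lam * ∫ ξ in Set.Ioi (0 : ℝ), ξ * Real.exp (-(c * β / d) * ξ)) ∧
    (lam * ∫ ξ in Set.Ioi (0 : ℝ), ξ * Real.exp (-(c * β / d) * ξ))
      = lam * d ^ 2 / (c ^ 2 * β ^ 2) := by
  obtain ⟨hβ_half, hβ_one⟩ := hβ
  have hden : ∀ τ ≥ (0 : ℝ), 0 < 1 + (2 * β - 1) * τ := fun τ hτ => by nlinarith
  have hη_deriv : ∀ τ ≥ (0 : ℝ),
      HasDerivAt η (-((β - 1) * (2 * β - 1)) / (1 + (2 * β - 1) * τ) ^ 2) τ := by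
    intro τ hτ
    rw [funext hη]
    exact hasDerivAt_const_div_one_add_mul _ _ τ (hden τ hτ).ne'
  have hη_nonpos : ∀ τ ≥ (0 : ℝ), η τ ≤ 0 := fun τ hτ => by
    rw [hη]
    exact div_nonpos_of_nonpos_of_nonneg (by linarith) (hden τ hτ).le
  obtain rfl : w = supersolutionProfile lam (c * β) d η := funext fun τ => funext (hw τ)
  refine ⟨fun τ hτ y _ => ⟨fokkerPlanck_residual_eq hd.ne' (hη_deriv τ hτ.le).differentiableAt y, ?_⟩,
    fun τ _ => robin_boundary_eq_zero hd.ne' τ,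
    fun τ hτ => setIntegral_moment_le hlam.le hd.le (by positivity) (hη_nonpos τ hτ), ?_⟩
  · have hη'_nonneg : 0 ≤ -((β - 1) * (2 * β - 1)) := by nlinarith
    rw [(hη_deriv τ hτ.le).deriv]
    exact mul_nonneg (by positivity) (nonneg hlam.le τ y)
  · rw [integral_Ioi_mul_exp_neg_mul (by positivity)]
    field_simp
end
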